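/- (Propensity score sufficiency) Let (Ω, F, P) be a probability space, T a {0,1}-valued random variable, and let H (the sigma-algebra generated by the potential outcomes) and G (the sigma-algebra generated by the covariates X) be sub-sigma-algebras of F. Let e be a G-measurable version of the conditional expectation E[T | G] (the propensity score). If E[T | H ⊔ G] = E[T | G] almost surely (conditional unconfoundedness given X), then E[T | H ⊔ σ(e)] = E[T | σ(e)] = e almost surely; that is, conditional independence of treatment and potential outcomes given X implies conditional independence given the propensity score alone. -/

import Mathlib

open MeasureTheory

/-! The propensity score `e` is `σ(e)`-measurable and is the conditional expectation of `T`
given `H ⊔ G` (by unconfoundedness) and given `G`. By the tower property, conditioning on any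
smaller sigma-algebra with respect to which `e` is measurable, such as `H ⊔ σ(e)` or `σ(e)`,
still returns `e`. -/

section TowerProperty

variable {α F : Type*} [NormedAddCommGroup F] [NormedSpace ℝ F] [CompleteSpace F]
  {m m₂ m₀ : MeasurableSpace α} {μ : Measure α} {f g : α → F}

theorem condExp_ae_eq_of_condExp_ae_eq_of_le (hm : m ≤ m₂) (hm₂ : m₂ ≤ m₀)
    [SigmaFinite (μ.trim hm₂)] [SigmaFinite (μ.trim (hm.trans hm₂))]
    (hg : StronglyMeasurable[m] g) (hfg : μ[f | m₂] =ᵐ[μ] g) : μ[f | m] =ᵐ[μ] g := by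
  have hg_int : Integrable g μ := integrable_condExp.congr hfg
  calc μ[f | m] =ᵐ[μ] μ[μ[f | m₂] | m] := (condExp_condExp_of_le hm hm₂).symm
    _ =ᵐ[μ] μ[g | m] := condExp_congr_ae hfg
    _ = g := condExp_of_stronglyMeasurable (hm.trans hm₂) hg hg_int

end TowerProperty

theorem propensity_score_sufficiency_general (Ω : Type*) [m0 : MeasurableSpace Ω]
    (P : Measure Ω) [IsProbabilityMeasure P]
    (T : Ω → ℝ)
    (H G : MeasurableSpace Ω) (hH : H ≤ m0) (hG : G ≤ m0)
    (e : Ω → ℝ) (he : StronglyMeasurable[G] e) (he_ce : e =ᵐ[P] P[T | G])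
    (hU : P[T | H ⊔ G] =ᵐ[P] P[T | G]) :
    P[T | H ⊔ MeasurableSpace.comap e Real.measurableSpace] =ᵐ[P] e ∧
    P[T | MeasurableSpace.comap e Real.measurableSpace] =ᵐ[P] e := by
  set E := MeasurableSpace.comap e Real.measurableSpace
  have hEG : E ≤ G := measurable_iff_comap_le.mp he.measurable
  have heE : StronglyMeasurable[E] e := (comap_measurable e).stronglyMeasurable
  exact ⟨condExp_ae_eq_of_condExp_ae_eq_of_le (sup_le_sup_left hEG H) (sup_le hH hG)
      (heE.mono le_sup_right) (hU.trans he_ce.symm),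
    condExp_ae_eq_of_condExp_ae_eq_of_le hEG hG heE he_ce.symm⟩

/-- Propensity score sufficiency (Rosenbaum–Rubin): if treatment `T ∈ {0,1}` is
conditionally unconfounded given the covariate sigma-algebra `G` (i.e.
`E[T | H ⊔ G] = E[T | G]` a.s., where `H` is the sigma-algebra of the potential
outcomes), and `e` is a `G`-measurable version of the propensity score `E[T | G]`,
then treatment is conditionally unconfounded given the propensity score alone:
`E[T | H ⊔ σ(e)] = E[T | σ(e)] = e` a.s. -/
theorem propensity_score_sufficiency (Ω : Type*) [m0 : MeasurableSpace Ω]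
    (P : Measure Ω) [IsProbabilityMeasure P]
    (T : Ω → ℝ) (hTmeas : Measurable T) (hT01 : ∀ ω, T ω = 0 ∨ T ω = 1)
    (H G : MeasurableSpace Ω) (hH : H ≤ m0) (hG : G ≤ m0)
    (e : Ω → ℝ) (he : StronglyMeasurable[G] e) (he_ce : e =ᵐ[P] P[T | G])
    (hU : P[T | H ⊔ G] =ᵐ[P] P[T | G]) :
    P[T | H ⊔ MeasurableSpace.comap e Real.measurableSpace] =ᵐ[P] e ∧
    P[T | MeasurableSpace.comap e Real.measurableSpace] =ᵐ[P] e :=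
  propensity_score_sufficiency_general Ω (m0 := m0) P T H G hH hG e he he_ce hU
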